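/- arXiv:2510.01027 — 4 statements merged into one kernel-verified Lean document; each statement's English description precedes it below -/
import Mathlib

section
/- For all w₁, w₂ in the open unit ball of a complex Hilbert space U with w₁ ≠ w₂, we have Re⟨w₁ - w₂, φ(w₁) - φ(w₂)⟩ > 0, where φ(w) = w/(1 - ‖w‖²). -/
/-!
Write `φ w = s(‖w‖²) • w` with `s r = (1 - r)⁻¹`. The identity
`Re ⟪x - y, s • x - t • y⟫ = (s + t)/2 ‖x - y‖² + (s - t)/2 (‖x‖² - ‖y‖²)`
reduces strict monotonicity to `s` being positive and nondecreasing on `[0, 1)`.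
-/

open scoped InnerProductSpace
open RCLike

section RadialScaling

variable {𝕜 E : Type*} [RCLike 𝕜] [NormedAddCommGroup E] [InnerProductSpace 𝕜 E]

theorem re_inner_sub_smul_sub_smul (x y : E) (s t : ℝ) :
    re ⟪x - y, (s : 𝕜) • x - (t : 𝕜) • y⟫_𝕜 =
      (s + t) / 2 * ‖x - y‖ ^ 2 + (s - t) / 2 * (‖x‖ ^ 2 - ‖y‖ ^ 2) := by
  simp only [inner_sub_left, inner_sub_right, inner_smul_real_right, map_sub, smul_re,
    ← inner_self_eq_norm_sq (𝕜 := 𝕜), inner_re_symm (𝕜 := 𝕜) y x]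
  ring

theorem re_inner_sub_smul_sub_smul_pos {x y : E} {s t : ℝ} (hxy : x ≠ y) (hst : 0 < s + t)
    (hmono : 0 ≤ (s - t) * (‖x‖ ^ 2 - ‖y‖ ^ 2)) :
    0 < re ⟪x - y, (s : 𝕜) • x - (t : 𝕜) • y⟫_𝕜 := by
  have hdist : 0 < ‖x - y‖ ^ 2 := by positivity [sub_ne_zero.2 hxy]
  rw [re_inner_sub_smul_sub_smul]
  nlinarith

theorem MonotoneOn.re_inner_sub_smul_norm_sq_pos {f : ℝ → ℝ} {S : Set ℝ} (hf : MonotoneOn f S)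
    (hpos : ∀ r ∈ S, 0 < f r) {x y : E} (hx : ‖x‖ ^ 2 ∈ S) (hy : ‖y‖ ^ 2 ∈ S) (hxy : x ≠ y) :
    0 < re ⟪x - y, (f (‖x‖ ^ 2) : 𝕜) • x - (f (‖y‖ ^ 2) : 𝕜) • y⟫_𝕜 := by
  refine re_inner_sub_smul_sub_smul_pos hxy (add_pos (hpos _ hx) (hpos _ hy)) ?_
  rcases le_total (‖x‖ ^ 2) (‖y‖ ^ 2) with hle | hle
  · exact mul_nonneg_of_nonpos_of_nonpos (sub_nonpos.2 (hf hx hy hle)) (sub_nonpos.2 hle)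
  · exact mul_nonneg (sub_nonneg.2 (hf hy hx hle)) (sub_nonneg.2 hle)

end RadialScaling

theorem monotoneOn_inv_one_sub : MonotoneOn (fun r : ℝ => (1 - r)⁻¹) (Set.Iio 1) :=
  fun _ _ _ hb hab => inv_anti₀ (sub_pos.2 hb) (by linarith)

theorem stmt_1_general {U : Type*} [NormedAddCommGroup U] [InnerProductSpace ℂ U]
    (φ : U → U) (hφ : ∀ w : U, φ w = ((1 - ‖w‖ ^ 2 : ℝ) : ℂ)⁻¹ • w)
    (w₁ w₂ : U) (h₁ : ‖w₁‖ < 1) (h₂ : ‖w₂‖ < 1) (hne : w₁ ≠ w₂) :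
    0 < (⟪w₁ - w₂, φ w₁ - φ w₂⟫_ℂ).re := by
  have hball {w : U} (hw : ‖w‖ < 1) : ‖w‖ ^ 2 ∈ Set.Iio 1 :=
    pow_lt_one₀ (norm_nonneg w) hw two_ne_zero
  simp only [hφ, ← Complex.ofReal_inv]
  exact monotoneOn_inv_one_sub.re_inner_sub_smul_norm_sq_pos (𝕜 := ℂ)
    (fun r hr => inv_pos.2 (sub_pos.2 hr)) (hball h₁) (hball h₂) hne

/-- Strict monotonicity of the funnel-control nonlinearity `φ(w) = w / (1 - ‖w‖²)`
on the open unit ball of a complex Hilbert space. -/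
theorem stmt_1 {U : Type*} [NormedAddCommGroup U] [InnerProductSpace ℂ U] [CompleteSpace U]
    (φ : U → U) (hφ : ∀ w : U, φ w = ((1 - ‖w‖ ^ 2 : ℝ) : ℂ)⁻¹ • w)
    (w₁ w₂ : U) (h₁ : ‖w₁‖ < 1) (h₂ : ‖w₂‖ < 1) (hne : w₁ ≠ w₂) :
    0 < (⟪w₁ - w₂, φ w₁ - φ w₂⟫_ℂ).re :=
  stmt_1_general φ hφ w₁ w₂ h₁ h₂ hne
end

section
/- Let U be a complex Hilbert space, φ(w) = w/(1 - ‖w‖²) on the open unit ball, and P ∈ L(U) with P + P* ≥ c·I for some c > 0. Then for every r ∈ U the equation w = r - Pφ(w) has a unique solution w in the open unit ball. -/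
/-!
Put `t = 1 - ‖w‖²`. Then `w = t • φ w`, so `v = φ w` solves `(t + P) v = r`. For `t ≥ 0` the
operator `t + P` is coercive, hence invertible with inverse continuous in `t`, and the intermediate
value theorem gives `t ∈ (0, 1]` with `t² ‖v_t‖² = 1 - t`; then `w = t • v_t` is a solution.
Uniqueness: two solutions satisfy `w₁ - w₂ = -P (φ w₁ - φ w₂)`, and since `φ` is monotone on the
ball this contradicts the strong monotonicity of `P` unless `φ w₁ = φ w₂`.
-/

open scoped InnerProductSpace

section

open RCLike Set

variable {𝕜 E : Type*} [RCLike 𝕜] [NormedAddCommGroup E] [InnerProductSpace 𝕜 E]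

variable (𝕜) in
noncomputable def ballMap (w : E) : E := ((1 - ‖w‖ ^ 2 : ℝ) : 𝕜)⁻¹ • w

theorem re_inner_ballMap_sub_ballMap_nonneg {w₁ w₂ : E} (h₁ : ‖w₁‖ < 1) (h₂ : ‖w₂‖ < 1) :
    0 ≤ re ⟪ballMap 𝕜 w₁ - ballMap 𝕜 w₂, w₁ - w₂⟫_𝕜 := by
  have hd₁ : 0 < 1 - ‖w₁‖ ^ 2 := by nlinarith [norm_nonneg w₁]
  have hd₂ : 0 < 1 - ‖w₂‖ ^ 2 := by nlinarith [norm_nonneg w₂]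
  have hexp : re ⟪ballMap 𝕜 w₁ - ballMap 𝕜 w₂, w₁ - w₂⟫_𝕜
      = (1 - ‖w₁‖ ^ 2)⁻¹ * ‖w₁‖ ^ 2 + (1 - ‖w₂‖ ^ 2)⁻¹ * ‖w₂‖ ^ 2
        - ((1 - ‖w₁‖ ^ 2)⁻¹ + (1 - ‖w₂‖ ^ 2)⁻¹) * re ⟪w₁, w₂⟫_𝕜 := by
    rw [ballMap, ballMap, ← ofReal_inv, ← ofReal_inv]
    simp only [inner_sub_left, inner_sub_right, inner_smul_left, conj_ofReal,
      map_sub, re_ofReal_mul, inner_self_eq_norm_sq, inner_re_symm w₂ w₁]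
    ring
  have hcs : re ⟪w₁, w₂⟫_𝕜 ≤ ‖w₁‖ * ‖w₂‖ := re_inner_le_norm w₁ w₂
  have key : (1 - ‖w₁‖ ^ 2)⁻¹ * ‖w₁‖ ^ 2 + (1 - ‖w₂‖ ^ 2)⁻¹ * ‖w₂‖ ^ 2
        - ((1 - ‖w₁‖ ^ 2)⁻¹ + (1 - ‖w₂‖ ^ 2)⁻¹) * (‖w₁‖ * ‖w₂‖)
      = (1 - ‖w₁‖ ^ 2)⁻¹ * (1 - ‖w₂‖ ^ 2)⁻¹ * ((‖w₁‖ - ‖w₂‖) ^ 2 * (1 + ‖w₁‖ * ‖w₂‖)) := by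
    field_simp; ring
  calc 0 ≤ (1 - ‖w₁‖ ^ 2)⁻¹ * (1 - ‖w₂‖ ^ 2)⁻¹ * ((‖w₁‖ - ‖w₂‖) ^ 2 * (1 + ‖w₁‖ * ‖w₂‖)) := by
        positivity
    _ = (1 - ‖w₁‖ ^ 2)⁻¹ * ‖w₁‖ ^ 2 + (1 - ‖w₂‖ ^ 2)⁻¹ * ‖w₂‖ ^ 2
        - ((1 - ‖w₁‖ ^ 2)⁻¹ + (1 - ‖w₂‖ ^ 2)⁻¹) * (‖w₁‖ * ‖w₂‖) := key.symm
    _ ≤ _ := by rw [hexp]; gcongr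

theorem eq_of_eq_sub_apply_of_re_inner_nonneg {P : E →L[𝕜] E} {c : ℝ} (hc : 0 < c)
    (hP : ∀ x, c * ‖x‖ ^ 2 ≤ re ⟪x, P x⟫_𝕜) {r w₁ w₂ x₁ x₂ : E}
    (h₁ : w₁ = r - P x₁) (h₂ : w₂ = r - P x₂) (hmono : 0 ≤ re ⟪x₁ - x₂, w₁ - w₂⟫_𝕜) :
    w₁ = w₂ := by
  have hdiff : w₁ - w₂ = -P (x₁ - x₂) := by rw [h₁, h₂, map_sub]; abel
  have hsq : c * ‖x₁ - x₂‖ ^ 2 ≤ 0 := by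
    calc c * ‖x₁ - x₂‖ ^ 2 ≤ re ⟪x₁ - x₂, P (x₁ - x₂)⟫_𝕜 := hP _
      _ = -re ⟪x₁ - x₂, w₁ - w₂⟫_𝕜 := by rw [hdiff, inner_neg_right, map_neg, neg_neg]
      _ ≤ 0 := neg_nonpos.mpr hmono
  have hx : x₁ - x₂ = 0 := by simpa using nonpos_of_mul_nonpos_right hsq hc
  rwa [hx, map_zero, neg_zero, sub_eq_zero] at hdiff

section Existence

variable [CompleteSpace E] {P : E →L[𝕜] E} {c : ℝ}

theorem isUnit_ofReal_smul_one_add (hc : 0 < c) (hP : ∀ x, c * ‖x‖ ^ 2 ≤ re ⟪x, P x⟫_𝕜)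
    {t : ℝ} (ht : 0 ≤ t) : IsUnit ((t : 𝕜) • (1 : E →L[𝕜] E) + P) := by
  refine ContinuousLinearMap.isUnit_of_forall_le_norm_inner_map _ (c := ⟨c, hc.le⟩) hc fun x ↦ ?_
  calc ‖x‖ ^ 2 * c ≤ t * ‖x‖ ^ 2 + re ⟪x, P x⟫_𝕜 := by nlinarith [hP x, sq_nonneg ‖x‖]
    _ = re ⟪((t : 𝕜) • (1 : E →L[𝕜] E) + P) x, x⟫_𝕜 := by
      simp [inner_add_left, inner_smul_left, inner_re_symm (P x) x]
    _ ≤ _ := re_le_norm _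

theorem continuousOn_inverse_ofReal_smul_one_add_apply (hc : 0 < c)
    (hP : ∀ x, c * ‖x‖ ^ 2 ≤ re ⟪x, P x⟫_𝕜) (r : E) :
    ContinuousOn (fun t : ℝ ↦ Ring.inverse ((t : 𝕜) • (1 : E →L[𝕜] E) + P) r) (Ici 0) := by
  intro t ht
  obtain ⟨u, hu⟩ := isUnit_ofReal_smul_one_add hc hP ht
  have hA : Continuous fun s : ℝ ↦ (s : 𝕜) • (1 : E →L[𝕜] E) + P := by fun_prop
  refine ContinuousAt.continuousWithinAt ?_
  exact ((NormedRing.inverse_continuousAt u).comp_of_eq hA.continuousAt hu.symm).clm_apply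
    continuousAt_const

theorem ofReal_smul_add_apply_inverse (hc : 0 < c) (hP : ∀ x, c * ‖x‖ ^ 2 ≤ re ⟪x, P x⟫_𝕜)
    {t : ℝ} (ht : 0 ≤ t) (r : E) :
    (t : 𝕜) • Ring.inverse ((t : 𝕜) • (1 : E →L[𝕜] E) + P) r
      + P (Ring.inverse ((t : 𝕜) • (1 : E →L[𝕜] E) + P) r) = r := by
  simpa using congr($(Ring.mul_inverse_cancel _ (isUnit_ofReal_smul_one_add hc hP ht)) r)

end Existence

theorem exists_mem_Ioc_sq_mul_sq_add_eq_one {g : ℝ → ℝ} (hg : ContinuousOn g (Icc 0 1)) :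
    ∃ t ∈ Ioc (0 : ℝ) 1, t ^ 2 * g t ^ 2 + t = 1 := by
  have hf : ContinuousOn (fun t ↦ t ^ 2 * g t ^ 2 + t) (Icc 0 1) := by fun_prop
  have h1 : (1 : ℝ) ∈ Icc (0 ^ 2 * g 0 ^ 2 + 0) (1 ^ 2 * g 1 ^ 2 + 1) :=
    ⟨by simp, by simpa using sq_nonneg (g 1)⟩
  obtain ⟨t, ht, hft⟩ := intermediate_value_Icc zero_le_one hf h1
  refine ⟨t, ⟨lt_of_le_of_ne ht.1 ?_, ht.2⟩, hft⟩
  rintro rfl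
  simp at hft

theorem eq_sub_apply_ballMap_of_ofReal_smul_add_apply {P : E →L[𝕜] E} {t : ℝ} (ht : 0 < t)
    {r v : E} (hv : (t : 𝕜) • v + P v = r) (hnorm : t ^ 2 * ‖v‖ ^ 2 + t = 1) :
    ‖(t : 𝕜) • v‖ < 1 ∧ (t : 𝕜) • v = r - P (ballMap 𝕜 ((t : 𝕜) • v)) := by
  have hw : ‖(t : 𝕜) • v‖ ^ 2 = 1 - t := by
    rw [norm_smul, norm_ofReal, abs_of_pos ht]; linarith
  refine ⟨by nlinarith [norm_nonneg ((t : 𝕜) • v)], ?_⟩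
  have hφ : ballMap 𝕜 ((t : 𝕜) • v) = v := by
    rw [ballMap, hw, sub_sub_cancel, smul_smul, inv_mul_cancel₀ (ofReal_ne_zero.mpr ht.ne'),
      one_smul]
  rw [hφ, ← hv, add_sub_cancel_right]

theorem existsUnique_norm_lt_one_eq_sub_apply_ballMap [CompleteSpace E] {P : E →L[𝕜] E} {c : ℝ}
    (hc : 0 < c) (hP : ∀ x, c * ‖x‖ ^ 2 ≤ re ⟪x, P x⟫_𝕜) (r : E) :
    ∃! w : E, ‖w‖ < 1 ∧ w = r - P (ballMap 𝕜 w) := by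
  obtain ⟨t, ht, hnorm⟩ := exists_mem_Ioc_sq_mul_sq_add_eq_one
    ((continuousOn_inverse_ofReal_smul_one_add_apply hc hP r).mono Icc_subset_Ici_self).norm
  obtain ⟨hw, hsol⟩ := eq_sub_apply_ballMap_of_ofReal_smul_add_apply ht.1
    (ofReal_smul_add_apply_inverse hc hP ht.1.le r) hnorm
  exact ⟨_, ⟨hw, hsol⟩, fun y ⟨hy, hysol⟩ ↦
    eq_of_eq_sub_apply_of_re_inner_nonneg hc hP hysol hsol
      (re_inner_ballMap_sub_ballMap_nonneg hy hw)⟩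

end

/-- If `P + P* ≥ c·I` with `c > 0`, then for every `r ∈ U` the equation
`w = r - Pφ(w)`, with `φ(w) = w/(1 - ‖w‖²)`, has a unique solution in the
open unit ball. -/
theorem stmt_4 {U : Type*} [NormedAddCommGroup U] [InnerProductSpace ℂ U] [CompleteSpace U]
    (φ : U → U) (hφ : ∀ w : U, φ w = ((1 - ‖w‖ ^ 2 : ℝ) : ℂ)⁻¹ • w)
    (P : U →L[ℂ] U) (c : ℝ) (hc : 0 < c)
    (hP : ∀ x : U, c / 2 * ‖x‖ ^ 2 ≤ (⟪x, P x⟫_ℂ).re)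
    (r : U) :
    ∃! w : U, ‖w‖ < 1 ∧ w = r - P (φ w) := by
  obtain rfl : φ = ballMap ℂ := funext hφ
  exact existsUnique_norm_lt_one_eq_sub_apply_ballMap (half_pos hc) hP r
end

section
/- Let X, U be complex Hilbert spaces, let S be a linear map from a subspace dom(S) ⊆ X × U to X × U with components (A&B, C&D), and suppose the passivity inequality Re⟨A&B(x,u), x⟩ ≤ Re⟨C&D(x,u), u⟩ holds on dom(S). Suppose (z, -φ₁) and (z, -φ₂) are both in dom(S) with C&D(z, -φᵢ) = wᵢ, ‖wᵢ‖ < 1, and φᵢ = φ(wᵢ) where φ(w) = w/(1-‖w‖²), and A&B(z, -φ₁) = A&B(z, -φ₂). Then w₁ = w₂. -/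
open scoped InnerProductSpace

/-- Single-valuedness of the closed-loop operator: under passivity, if
`(z, -φ(w₁))` and `(z, -φ(w₂))` both lie in `dom(S)` with `C&D(z, -φ(wᵢ)) = wᵢ`,
`‖wᵢ‖ < 1`, and `A&B(z, -φ(w₁)) = A&B(z, -φ(w₂))`, then `w₁ = w₂`. -/
theorem stmt_11 {X U : Type*}
    [NormedAddCommGroup X] [InnerProductSpace ℂ X] [CompleteSpace X]
    [NormedAddCommGroup U] [InnerProductSpace ℂ U] [CompleteSpace U]
    (D : Submodule ℂ (X × U)) (AB : D →ₗ[ℂ] X) (CD : D →ₗ[ℂ] U)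
    (hpass : ∀ p : D, (⟪AB p, (p : X × U).1⟫_ℂ).re ≤ (⟪CD p, (p : X × U).2⟫_ℂ).re)
    (φ : U → U) (hφ : ∀ w : U, φ w = ((1 - ‖w‖ ^ 2 : ℝ) : ℂ)⁻¹ • w)
    (z : X) (w₁ w₂ : U) (hw₁ : ‖w₁‖ < 1) (hw₂ : ‖w₂‖ < 1)
    (h₁ : (z, -φ w₁) ∈ D) (h₂ : (z, -φ w₂) ∈ D)
    (hC₁ : CD ⟨(z, -φ w₁), h₁⟩ = w₁) (hC₂ : CD ⟨(z, -φ w₂), h₂⟩ = w₂)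
    (hA : AB ⟨(z, -φ w₁), h₁⟩ = AB ⟨(z, -φ w₂), h₂⟩) :
    w₁ = w₂ := by
  by_contra hne
  set p₁ : D := ⟨(z, -φ w₁), h₁⟩
  set p₂ : D := ⟨(z, -φ w₂), h₂⟩
  have hp := hpass (p₁ - p₂)
  have hco : ((p₁ - p₂ : D) : X × U) = (0, φ w₂ - φ w₁) := by
    simp [p₁, p₂, Prod.ext_iff]
    abel
  have hAB : AB (p₁ - p₂) = 0 := by
    rw [map_sub, hA, sub_self]
  have hCD : CD (p₁ - p₂) = w₁ - w₂ := by
    rw [map_sub, hC₁, hC₂]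
  rw [hAB, hCD, hco] at hp
  simp only [inner_zero_left, map_zero] at hp
  -- hp : 0 ≤ re ⟪w₁ - w₂, φ w₂ - φ w₁⟫
  set a := ‖w₁‖ with ha
  set b := ‖w₂‖ with hb
  set t := (⟪w₁, w₂⟫_ℂ).re with ht
  have ha2 : (0:ℝ) < 1 - a ^ 2 := by nlinarith [norm_nonneg w₁]
  have hb2 : (0:ℝ) < 1 - b ^ 2 := by nlinarith [norm_nonneg w₂]
  have hkey : (⟪w₁ - w₂, φ w₂ - φ w₁⟫_ℂ).re =
      -((1 - a ^ 2)⁻¹ * a ^ 2 + (1 - b ^ 2)⁻¹ * b ^ 2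
        - ((1 - a ^ 2)⁻¹ + (1 - b ^ 2)⁻¹) * t) := by
    have e1 : (⟪w₁, w₁⟫_ℂ).re = a ^ 2 := by
      rw [inner_self_eq_norm_sq_to_K (𝕜 := ℂ)]
      norm_num [ha, ← Complex.ofReal_pow]
    have e2 : (⟪w₂, w₂⟫_ℂ).re = b ^ 2 := by
      rw [inner_self_eq_norm_sq_to_K (𝕜 := ℂ)]
      norm_num [hb, ← Complex.ofReal_pow]
    have e3 : (⟪w₂, w₁⟫_ℂ).re = t := by
      rw [ht, ← inner_conj_symm w₁ w₂, Complex.conj_re]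
    rw [hφ w₁, hφ w₂, ← Complex.ofReal_inv, ← Complex.ofReal_inv, ← ha, ← hb]
    simp only [inner_sub_left, inner_sub_right, inner_smul_right, Complex.sub_re,
      Complex.re_ofReal_mul]
    rw [e1, e2, e3, ← ht]
    ring
  have hnsq : 0 < a ^ 2 + b ^ 2 - 2 * t := by
    have : ‖w₁ - w₂‖ ^ 2 = a ^ 2 - 2 * t + b ^ 2 := by
      exact_mod_cast norm_sub_sq (𝕜 := ℂ) w₁ w₂
    have hpos : 0 < ‖w₁ - w₂‖ ^ 2 := by
      have h : w₁ - w₂ ≠ 0 := sub_ne_zero_of_ne hne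
      have := norm_pos_iff.mpr h
      positivity
    linarith
  rw [hkey] at hp
  have hc₁ : (1 - a ^ 2)⁻¹ * (1 - a ^ 2) = 1 := inv_mul_cancel₀ (ne_of_gt ha2)
  have hc₂ : (1 - b ^ 2)⁻¹ * (1 - b ^ 2) = 1 := inv_mul_cancel₀ (ne_of_gt hb2)
  have hi₁ : 0 < (1 - a ^ 2)⁻¹ := inv_pos.mpr ha2
  have hi₂ : 0 < (1 - b ^ 2)⁻¹ := inv_pos.mpr hb2
  norm_num at hp
  have hdiff : (1 - a ^ 2)⁻¹ - (1 - b ^ 2)⁻¹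
      = (a ^ 2 - b ^ 2) * ((1 - a ^ 2)⁻¹ * (1 - b ^ 2)⁻¹) := by
    field_simp
    try ring
  have e : 2 * ((1 - a ^ 2)⁻¹ * a ^ 2 + (1 - b ^ 2)⁻¹ * b ^ 2
        - ((1 - a ^ 2)⁻¹ + (1 - b ^ 2)⁻¹) * t)
      = ((1 - a ^ 2)⁻¹ + (1 - b ^ 2)⁻¹) * (a ^ 2 + b ^ 2 - 2 * t)
        + ((1 - a ^ 2)⁻¹ - (1 - b ^ 2)⁻¹) * (a ^ 2 - b ^ 2) := by ring
  rw [hdiff] at e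
  nlinarith [mul_pos (add_pos hi₁ hi₂) hnsq,
    mul_nonneg (sq_nonneg (a ^ 2 - b ^ 2)) (mul_pos hi₁ hi₂).le]
end

section
/- Consider the scalar system ẋ = -x + u, y = -x + u. Suppose x : ℝ≥0 → ℝ is differentiable with ẋ(t) = -x(t) + u(t) and the output satisfies y(t) = -x(t) + u(t) ∈ (1/2, 3/2) for all t ≥ 0. Then x(t) ≥ x(0) + t/2 and u(t) ≥ x(0) + t/2 + 1/2 for all t ≥ 0; in particular both x and u are unbounded. -/
/-- Counterexample: for the passive scalar system `ẋ = -x + u`, `y = -x + u`,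
if the output stays in the funnel `(1/2, 3/2)` for all `t ≥ 0`, then
`x(t) ≥ x(0) + t/2` and `u(t) ≥ x(0) + t/2 + 1/2`; in particular both the state
and the input are unbounded. -/
theorem stmt_16 (x u y : ℝ → ℝ)
    (hx : ∀ t : ℝ, 0 ≤ t → HasDerivAt x (-x t + u t) t)
    (hy : ∀ t : ℝ, y t = -x t + u t)
    (hrange : ∀ t : ℝ, 0 ≤ t → y t ∈ Set.Ioo (1 / 2 : ℝ) (3 / 2)) :
    (∀ t : ℝ, 0 ≤ t → x 0 + t / 2 ≤ x t ∧ x 0 + t / 2 + 1 / 2 ≤ u t) ∧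
      (¬ ∃ M : ℝ, ∀ t : ℝ, 0 ≤ t → x t ≤ M) ∧
      (¬ ∃ M : ℝ, ∀ t : ℝ, 0 ≤ t → u t ≤ M) := by
  have key : ∀ t : ℝ, 0 ≤ t → x 0 + t / 2 ≤ x t ∧ x 0 + t / 2 + 1 / 2 ≤ u t := by
    have hg : ∀ t : ℝ, 0 ≤ t →
        HasDerivAt (fun s => x s - s / 2) (-x t + u t - 1 / 2) t := by
      intro t ht
      exact (hx t ht).sub ((hasDerivAt_id t).div_const 2)
    have hmono : MonotoneOn (fun s => x s - s / 2) (Set.Ici 0) := by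
      apply monotoneOn_of_deriv_nonneg (convex_Ici 0)
      · intro t ht
        exact ((hg t ht).continuousAt).continuousWithinAt
      · intro t ht
        rw [interior_Ici] at ht
        exact ((hg t (le_of_lt ht)).differentiableAt).differentiableWithinAt
      · intro t ht
        rw [interior_Ici] at ht
        rw [(hg t (le_of_lt ht)).deriv]
        have := (hrange t (le_of_lt ht)).1
        rw [hy t] at this
        linarith
    intro t ht
    have h1 := hmono (Set.self_mem_Ici) (Set.mem_Ici.mpr ht) ht
    simp only at h1
    have hxt : x 0 + t / 2 ≤ x t := by linarith
    have hyt := (hrange t ht).1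
    rw [hy t] at hyt
    exact ⟨hxt, by linarith⟩
  refine ⟨key, ?_, ?_⟩
  · rintro ⟨M, hM⟩
    set t := max 0 (2 * (M - x 0) + 2) with htdef
    have ht0 : 0 ≤ t := le_max_left _ _
    have ht2 : 2 * (M - x 0) + 2 ≤ t := le_max_right _ _
    have := (key t ht0).1
    have := hM t ht0
    linarith
  · rintro ⟨M, hM⟩
    set t := max 0 (2 * (M - x 0) + 2) with htdef
    have ht0 : 0 ≤ t := le_max_left _ _
    have ht2 : 2 * (M - x 0) + 2 ≤ t := le_max_right _ _
    have := (key t ht0).2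
    have := hM t ht0
    linarith
end
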